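/- Let E be a finite-dimensional real inner product space, τ ≠ 0 a real number, p ∈ E, and K ≥ 0. Let (xₘ) be a sequence of twice continuously differentiable curves xₘ : [0,1] → E with xₘ(0) = p and ½ ∫₀¹ (‖xₘ″(t)‖² + τ² ‖xₘ′(t)‖²) dt ≤ K for all m. Then there exist a strictly increasing map φ : ℕ → ℕ and a continuously differentiable curve y : [0,1] → E such that x_{φ(m)} → y and x_{φ(m)}′ → y′ uniformly on [0,1]. -/

import Mathlib

/-!
The energy bound controls `x_m''` in `L²` and, since `τ ≠ 0`, also `x_m'` in `L²`.
By the fundamental theorem of calculus and Cauchy–Schwarz, `‖x_m'(t) - x_m'(s)‖² ≤ 2K |t - s|`,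
so the derivatives are uniformly `1/2`-Hölder; together with a point where `‖x_m'‖²` is at
most its mean, this bounds them uniformly. Arzelà–Ascoli gives a subsequence with
`x_{φ m}' → G` uniformly, and since all curves start at `p`, integrating gives
`x_{φ m} → p + ∫₀ᵗ G` uniformly.
-/

open Set Filter Topology MeasureTheory intervalIntegral BoundedContinuousFunction

theorem sq_intervalIntegral_le_mul_intervalIntegral_sq {g : ℝ → ℝ} {a b : ℝ} (hab : a ≤ b)
    (hg : IntervalIntegrable g volume a b)
    (hg2 : IntervalIntegrable (fun u => g u ^ 2) volume a b) :
    (∫ u in a..b, g u) ^ 2 ≤ (b - a) * ∫ u in a..b, g u ^ 2 := by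
  -- `c ↦ ∫ (g - c)²` is a nonnegative quadratic polynomial, so its discriminant is `≤ 0`.
  have hquad : ∀ c : ℝ,
      0 ≤ (b - a) * (c * c) + (-2 * ∫ u in a..b, g u) * c + ∫ u in a..b, g u ^ 2 := by
    intro c
    have h : ∫ u in a..b, 2 * c * g u ≤ ∫ u in a..b, (g u ^ 2 + c ^ 2) :=
      integral_mono_on hab (hg.const_mul _) (hg2.add intervalIntegrable_const)
        fun u _ => by nlinarith [sq_nonneg (g u - c)]
    rw [intervalIntegral.integral_const_mul, integral_add hg2 intervalIntegrable_const,
      intervalIntegral.integral_const, smul_eq_mul] at h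
    nlinarith
  have := discrim_le_zero hquad
  rw [discrim] at this
  nlinarith

theorem Metric.uniformEquicontinuousOn_of_continuity_modulus {ι α β : Type*}
    [PseudoMetricSpace α] [PseudoMetricSpace β] {K : Set β} (b : ℝ → ℝ)
    (b_lim : Tendsto b (𝓝 0) (𝓝 0)) (F : ι → β → α)
    (H : ∀ x ∈ K, ∀ y ∈ K, ∀ i, dist (F i x) (F i y) ≤ b (dist x y)) :
    UniformEquicontinuousOn F K :=
  (uniformEquicontinuous_restrict_iff F).1 <|
    Metric.uniformEquicontinuous_of_continuity_modulus b b_lim _ fun x y i => H x x.2 y y.2 i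

theorem IsCompact.exists_strictMono_tendstoUniformlyOn_of_equicontinuousOn {X β : Type*}
    [TopologicalSpace X] [MetricSpace β] {K : Set X} (hK : IsCompact K) {S : Set β}
    (hS : IsCompact S) {g : ℕ → X → β} (hgS : ∀ m, ∀ x ∈ K, g m x ∈ S)
    (hg : EquicontinuousOn g K) :
    ∃ φ : ℕ → ℕ, StrictMono φ ∧ ∃ G : X → β,
      TendstoUniformlyOn (fun m => g (φ m)) G atTop K := by
  have : CompactSpace K := isCompact_iff_compactSpace.1 hK
  have hequi : Equicontinuous (K.domRestrict ∘ g) := (equicontinuous_restrict_iff g).2 hg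
  let F : ℕ → K →ᵇ β := fun m => mkOfCompact ⟨K.domRestrict (g m), hequi.continuous m⟩
  have hF : ((↑) : range F → K → β) = (K.domRestrict ∘ g) ∘ rangeSplitting F := by
    funext i
    change ⇑(i : K →ᵇ β) = ⇑(F (rangeSplitting F i))
    rw [apply_rangeSplitting F i]
  have hcpt : IsCompact (closure (range F)) :=
    arzela_ascoli S hS (range F) (by rintro _ ⟨x, hx⟩ ⟨m, rfl⟩; exact hgS m x hx)
      (hF ▸ hequi.comp _)
  obtain ⟨h, -, φ, hφ, hlim⟩ := hcpt.isSeqCompact fun m => subset_closure (mem_range_self m)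
  refine ⟨φ, hφ, Function.extend (↑) h (g 0), ?_⟩
  rw [tendstoUniformlyOn_iff_tendstoUniformly_comp_coe,
    Function.extend_comp Subtype.val_injective]
  exact tendsto_iff_tendstoUniformly.1 hlim

section
variable {E : Type*} [NormedAddCommGroup E] [NormedSpace ℝ E]

theorem integral_eq_sub_of_hasDerivWithinAt_Icc [CompleteSpace E] {f f' : ℝ → E} {a b : ℝ}
    (hab : a ≤ b) (hf : ∀ u ∈ Icc a b, HasDerivWithinAt f (f' u) (Icc a b) u)
    (hf' : ContinuousOn f' (Icc a b)) :
    ∫ u in a..b, f' u = f b - f a :=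
  integral_eq_sub_of_hasDeriv_right_of_le hab (fun u hu => (hf u hu).continuousWithinAt)
    (fun u hu => ((hf u (Ioo_subset_Icc_self hu)).hasDerivAt
      (Icc_mem_nhds hu.1 hu.2)).hasDerivWithinAt)
    (hf'.intervalIntegrable_of_Icc hab)

theorem norm_sub_sq_le_mul_integral_norm_sq [CompleteSpace E] {f f' : ℝ → E} {a b : ℝ}
    (hab : a ≤ b) (hf : ∀ u ∈ Icc a b, HasDerivWithinAt f (f' u) (Icc a b) u)
    (hf' : ContinuousOn f' (Icc a b)) :
    ‖f b - f a‖ ^ 2 ≤ (b - a) * ∫ u in a..b, ‖f' u‖ ^ 2 := by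
  rw [← integral_eq_sub_of_hasDerivWithinAt_Icc hab hf hf']
  calc ‖∫ u in a..b, f' u‖ ^ 2 ≤ (∫ u in a..b, ‖f' u‖) ^ 2 := by
        gcongr; exact norm_integral_le_integral_norm hab
    _ ≤ (b - a) * ∫ u in a..b, ‖f' u‖ ^ 2 :=
        sq_intervalIntegral_le_mul_intervalIntegral_sq hab
          (hf'.norm.intervalIntegrable_of_Icc hab) ((hf'.norm.pow 2).intervalIntegrable_of_Icc hab)

theorem dist_le_sqrt_integral_norm_sq_mul_dist [CompleteSpace E] {f f' : ℝ → E} {a b : ℝ}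
    (hf : ∀ u ∈ Icc a b, HasDerivWithinAt f (f' u) (Icc a b) u)
    (hf' : ContinuousOn f' (Icc a b)) {s t : ℝ} (hs : s ∈ Icc a b) (ht : t ∈ Icc a b) :
    dist (f s) (f t) ≤ √((∫ u in a..b, ‖f' u‖ ^ 2) * dist s t) := by
  wlog hst : s ≤ t generalizing s t
  · rw [dist_comm, dist_comm s]; exact this ht hs (le_of_not_ge hst)
  have hsub : Icc s t ⊆ Icc a b := Icc_subset_Icc hs.1 ht.2
  rw [dist_comm, dist_eq_norm, Real.dist_eq, abs_of_nonpos (sub_nonpos.2 hst), neg_sub]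
  refine Real.le_sqrt_of_sq_le ?_
  calc ‖f t - f s‖ ^ 2 ≤ (t - s) * ∫ u in s..t, ‖f' u‖ ^ 2 :=
        norm_sub_sq_le_mul_integral_norm_sq hst (fun u hu => (hf u (hsub hu)).mono hsub)
          (hf'.mono hsub)
    _ ≤ (t - s) * ∫ u in a..b, ‖f' u‖ ^ 2 :=
        mul_le_mul_of_nonneg_left (integral_mono_interval hs.1 hst ht.2
          (Eventually.of_forall fun u => sq_nonneg _)
          ((hf'.norm.pow 2).intervalIntegrable_of_Icc (hs.1.trans hs.2))) (sub_nonneg.2 hst)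
    _ = (∫ u in a..b, ‖f' u‖ ^ 2) * (t - s) := mul_comm _ _

theorem norm_le_sqrt_integral_norm_sq_add_sqrt_integral_norm_deriv_sq [CompleteSpace E]
    {f f' : ℝ → E} {a b : ℝ} (hab : a < b)
    (hf : ∀ u ∈ Icc a b, HasDerivWithinAt f (f' u) (Icc a b) u)
    (hf' : ContinuousOn f' (Icc a b)) {t : ℝ} (ht : t ∈ Icc a b) :
    ‖f t‖ ≤ √((∫ u in a..b, ‖f u‖ ^ 2) / (b - a)) + √((∫ u in a..b, ‖f' u‖ ^ 2) * (b - a)) := by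
  have hfc : ContinuousOn f (Icc a b) := fun u hu => (hf u hu).continuousWithinAt
  obtain ⟨t₀, ht₀, hmin⟩ := isCompact_Icc.exists_isMinOn (nonempty_Icc.2 hab.le) hfc.norm
  have hmin_sq : ‖f t₀‖ ^ 2 * (b - a) ≤ ∫ u in a..b, ‖f u‖ ^ 2 := by
    have := integral_mono_on (μ := volume) hab.le intervalIntegrable_const
      ((hfc.norm.pow 2).intervalIntegrable_of_Icc hab.le)
      fun u hu => pow_le_pow_left₀ (norm_nonneg _) (hmin hu) 2
    rwa [intervalIntegral.integral_const, smul_eq_mul, mul_comm] at this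
  calc ‖f t‖ ≤ ‖f t₀‖ + dist (f t) (f t₀) := by
        rw [dist_eq_norm]; exact norm_le_norm_add_norm_sub' _ _
    _ ≤ √((∫ u in a..b, ‖f u‖ ^ 2) / (b - a)) + √((∫ u in a..b, ‖f' u‖ ^ 2) * (b - a)) := by
        gcongr
        · exact Real.le_sqrt_of_sq_le ((le_div_iff₀ (sub_pos.2 hab)).2 hmin_sq)
        · refine (dist_le_sqrt_integral_norm_sq_mul_dist hf hf' ht ht₀).trans ?_
          gcongr
          · exact integral_nonneg hab.le fun u _ => sq_nonneg _
          · exact Real.dist_le_of_mem_Icc ht ht₀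

theorem TendstoUniformlyOn.intervalIntegral_Icc {ι : Type*} {l : Filter ι} {a b : ℝ}
    {f : ι → ℝ → E} {G : ℝ → E} (hf : ∀ i, ContinuousOn (f i) (Icc a b))
    (hG : ContinuousOn G (Icc a b)) (hfG : TendstoUniformlyOn f G l (Icc a b)) :
    TendstoUniformlyOn (fun i t => ∫ u in a..t, f i u) (fun t => ∫ u in a..t, G u) l
      (Icc a b) := by
  rw [Metric.tendstoUniformlyOn_iff] at hfG ⊢
  intro ε hε
  have hδ : 0 < ε / (|b - a| + 1) := by positivity
  filter_upwards [hfG _ hδ] with i hi t ht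
  have hsub : Icc a t ⊆ Icc a b := Icc_subset_Icc le_rfl ht.2
  rw [dist_eq_norm, ← integral_sub ((hG.mono hsub).intervalIntegrable_of_Icc ht.1)
    ((hf i |>.mono hsub).intervalIntegrable_of_Icc ht.1)]
  calc ‖∫ u in a..t, (G u - f i u)‖ ≤ ε / (|b - a| + 1) * |t - a| :=
        norm_integral_le_of_norm_le_const fun u hu => by
          rw [uIoc_of_le ht.1] at hu
          rw [← dist_eq_norm]
          exact (hi u (hsub (Ioc_subset_Icc_self hu))).le
    _ ≤ ε / (|b - a| + 1) * |b - a| := by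
        gcongr
        exacts [sub_nonneg.2 ht.1, ht.2]
    _ < ε := by
        rw [div_mul_eq_mul_div, div_lt_iff₀ (by positivity)]
        nlinarith [abs_nonneg (b - a)]

theorem exists_hasDerivWithinAt_tendstoUniformlyOn_of_tendstoUniformlyOn_deriv [CompleteSpace E]
    {ι : Type*} {l : Filter ι} {a b : ℝ} (hab : a ≤ b) {x f : ι → ℝ → E} {G : ℝ → E} {p : E}
    (hx : ∀ i, ∀ t ∈ Icc a b, HasDerivWithinAt (x i) (f i t) (Icc a b) t)
    (hf : ∀ i, ContinuousOn (f i) (Icc a b)) (hxa : ∀ i, x i a = p)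
    (hG : ContinuousOn G (Icc a b)) (hfG : TendstoUniformlyOn f G l (Icc a b)) :
    ∃ y : ℝ → E, (∀ t ∈ Icc a b, HasDerivWithinAt y (G t) (Icc a b) t) ∧
      TendstoUniformlyOn x y l (Icc a b) := by
  -- Extending `G` continuously to `ℝ` makes its primitive differentiable everywhere.
  set G' := IccExtend hab ((Icc a b).domRestrict G)
  have hG'c : Continuous G' := (continuousOn_iff_continuous_domRestrict.1 hG).Icc_extend'
  have hG' : EqOn G' G (Icc a b) := fun t ht => IccExtend_of_mem hab _ ht
  have hprim : ∀ i, ∀ t ∈ Icc a b, x i t = p + ∫ u in a..t, f i u := fun i t ht => by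
    have hsub : Icc a t ⊆ Icc a b := Icc_subset_Icc le_rfl ht.2
    rw [integral_eq_sub_of_hasDerivWithinAt_Icc ht.1 (fun u hu => (hx i u (hsub hu)).mono hsub)
      ((hf i).mono hsub), hxa, add_sub_cancel]
  refine ⟨fun t => p + ∫ u in a..t, G' u, fun t ht => ?_, ?_⟩
  · rw [← hG' ht]
    exact ((hG'c.integral_hasStrictDerivAt a t).hasDerivAt.const_add p).hasDerivWithinAt
  · have := (hfG.congr_right hG'.symm).intervalIntegral_Icc hf hG'c.continuousOn
    rw [Metric.tendstoUniformlyOn_iff] at this ⊢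
    intro ε hε
    filter_upwards [this ε hε] with i hi t ht
    rw [hprim i t ht, dist_add_left]
    exact hi t ht

noncomputable def cubicTensionEnergy (τ : ℝ) (x : ℝ → E) : ℝ :=
  (1 / 2 : ℝ) * ∫ t in (0 : ℝ)..1,
    (‖iteratedDerivWithin 2 x (Icc 0 1) t‖ ^ 2 + τ ^ 2 * ‖iteratedDerivWithin 1 x (Icc 0 1) t‖ ^ 2)

theorem integral_norm_sq_le_of_cubicTensionEnergy_le {x : ℝ → E} {τ K : ℝ}
    (hx : ContDiffOn ℝ 2 x (Icc 0 1)) (hJ : cubicTensionEnergy τ x ≤ K) :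
    ∫ t in (0 : ℝ)..1, ‖derivWithin (derivWithin x (Icc 0 1)) (Icc 0 1) t‖ ^ 2 ≤ 2 * K ∧
      τ ^ 2 * ∫ t in (0 : ℝ)..1, ‖derivWithin x (Icc 0 1) t‖ ^ 2 ≤ 2 * K := by
  have hI : UniqueDiffOn ℝ (Icc (0 : ℝ) 1) := uniqueDiffOn_Icc one_pos
  have hx1 : ContDiffOn ℝ 1 (derivWithin x (Icc 0 1)) (Icc 0 1) := hx.derivWithin hI (by norm_num)
  have hint1 : IntervalIntegrable
      (fun t => ‖derivWithin (derivWithin x (Icc 0 1)) (Icc 0 1) t‖ ^ 2) volume 0 1 :=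
    ((hx1.continuousOn_derivWithin hI le_rfl).norm.pow 2).intervalIntegrable_of_Icc zero_le_one
  have hint2 : IntervalIntegrable (fun t => ‖derivWithin x (Icc 0 1) t‖ ^ 2) volume 0 1 :=
    (hx1.continuousOn.norm.pow 2).intervalIntegrable_of_Icc zero_le_one
  have hnonneg1 := integral_nonneg (μ := volume) zero_le_one fun t _ =>
    sq_nonneg ‖derivWithin (derivWithin x (Icc 0 1)) (Icc 0 1) t‖
  have hnonneg2 := integral_nonneg (μ := volume) zero_le_one fun t _ =>
    sq_nonneg ‖derivWithin x (Icc 0 1) t‖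
  have hτ2 := sq_nonneg τ
  rw [cubicTensionEnergy, iteratedDerivWithin_succ, iteratedDerivWithin_one,
    integral_add hint1 (hint2.const_mul _), intervalIntegral.integral_const_mul] at hJ
  constructor <;> nlinarith

theorem dist_derivWithin_le_of_cubicTensionEnergy_le [CompleteSpace E] {x : ℝ → E} {τ K : ℝ}
    (hx : ContDiffOn ℝ 2 x (Icc 0 1)) (hJ : cubicTensionEnergy τ x ≤ K) {s t : ℝ}
    (hs : s ∈ Icc 0 1) (ht : t ∈ Icc 0 1) :
    dist (derivWithin x (Icc 0 1) s) (derivWithin x (Icc 0 1) t) ≤ √(2 * K * dist s t) := by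
  have hI : UniqueDiffOn ℝ (Icc (0 : ℝ) 1) := uniqueDiffOn_Icc one_pos
  have hx1 : ContDiffOn ℝ 1 (derivWithin x (Icc 0 1)) (Icc 0 1) := hx.derivWithin hI (by norm_num)
  refine (dist_le_sqrt_integral_norm_sq_mul_dist
    (fun u hu => (hx1.differentiableOn one_ne_zero u hu).hasDerivWithinAt)
    (hx1.continuousOn_derivWithin hI le_rfl) hs ht).trans ?_
  gcongr
  exact (integral_norm_sq_le_of_cubicTensionEnergy_le hx hJ).1

theorem norm_derivWithin_le_of_cubicTensionEnergy_le [CompleteSpace E] {x : ℝ → E} {τ K : ℝ}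
    (hτ : τ ≠ 0) (hx : ContDiffOn ℝ 2 x (Icc 0 1)) (hJ : cubicTensionEnergy τ x ≤ K) {t : ℝ}
    (ht : t ∈ Icc 0 1) :
    ‖derivWithin x (Icc 0 1) t‖ ≤ √(2 * K / τ ^ 2) + √(2 * K) := by
  have hI : UniqueDiffOn ℝ (Icc (0 : ℝ) 1) := uniqueDiffOn_Icc one_pos
  have hx1 : ContDiffOn ℝ 1 (derivWithin x (Icc 0 1)) (Icc 0 1) := hx.derivWithin hI (by norm_num)
  obtain ⟨hx''_L2, hx'_L2⟩ := integral_norm_sq_le_of_cubicTensionEnergy_le hx hJ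
  refine (norm_le_sqrt_integral_norm_sq_add_sqrt_integral_norm_deriv_sq one_pos
    (fun u hu => (hx1.differentiableOn one_ne_zero u hu).hasDerivWithinAt)
    (hx1.continuousOn_derivWithin hI le_rfl) ht).trans ?_
  simp only [sub_zero, div_one, mul_one]
  gcongr
  rwa [le_div_iff₀ (sq_pos_of_ne_zero hτ), mul_comm]

end

/-- Lemma 5.1 for curves in Euclidean space: the cubics-in-tension functional is
weakly proper with respect to `C¹`: a bound on `𝒥` together with a fixed initial
point forces relative compactness in the `C¹` topology. -/
theorem stmt7 {E : Type*} [NormedAddCommGroup E] [InnerProductSpace ℝ E]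
    [FiniteDimensional ℝ E]
    (τ : ℝ) (hτ : τ ≠ 0) (p : E) (K : ℝ) (x : ℕ → ℝ → E)
    (hx : ∀ m, ContDiffOn ℝ 2 (x m) (Set.Icc 0 1))
    (hp : ∀ m, x m 0 = p)
    (hJ : ∀ m, (1/2 : ℝ) * (∫ t in (0:ℝ)..1,
        (‖iteratedDerivWithin 2 (x m) (Set.Icc 0 1) t‖ ^ 2 +
          τ ^ 2 * ‖iteratedDerivWithin 1 (x m) (Set.Icc 0 1) t‖ ^ 2)) ≤ K) :
    ∃ φ : ℕ → ℕ, StrictMono φ ∧ ∃ y : ℝ → E,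
      ContDiffOn ℝ 1 y (Set.Icc 0 1) ∧
      TendstoUniformlyOn (fun m => x (φ m)) y Filter.atTop (Set.Icc 0 1) ∧
      TendstoUniformlyOn (fun m => derivWithin (x (φ m)) (Set.Icc 0 1))
        (derivWithin y (Set.Icc 0 1)) Filter.atTop (Set.Icc 0 1) := by
  set I := Icc (0 : ℝ) 1
  have hI : UniqueDiffOn ℝ I := uniqueDiffOn_Icc one_pos
  have hf : ∀ m, ContDiffOn ℝ 1 (derivWithin (x m) I) I := fun m =>
    (hx m).derivWithin hI (by norm_num)
  have hequi : EquicontinuousOn (fun m => derivWithin (x m) I) I :=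
    (Metric.uniformEquicontinuousOn_of_continuity_modulus (fun r => √(2 * K * r))
      (by simpa using ((continuous_const.mul continuous_id).sqrt.tendsto (0 : ℝ))) _
      fun s hs t ht m => dist_derivWithin_le_of_cubicTensionEnergy_le (hx m) (hJ m) hs ht
      ).equicontinuousOn
  obtain ⟨φ, hφ, G, hG⟩ := isCompact_Icc.exists_strictMono_tendstoUniformlyOn_of_equicontinuousOn
    (isCompact_closedBall 0 (√(2 * K / τ ^ 2) + √(2 * K)))
    (fun m t ht => mem_closedBall_zero_iff.2
      (norm_derivWithin_le_of_cubicTensionEnergy_le hτ (hx m) (hJ m) ht)) hequi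
  have hGc : ContinuousOn G I := hG.continuousOn (.of_forall fun m => (hf _).continuousOn)
  obtain ⟨y, hy, hxy⟩ := exists_hasDerivWithinAt_tendstoUniformlyOn_of_tendstoUniformlyOn_deriv
    zero_le_one (fun m t ht => ((hx (φ m)).differentiableOn (by norm_num) t ht).hasDerivWithinAt)
    (fun m => (hf (φ m)).continuousOn) (fun m => hp (φ m)) hGc hG
  have hyG : EqOn (derivWithin y I) G I := fun t ht => (hy t ht).derivWithin (hI t ht)
  exact ⟨φ, hφ, y, (contDiffOn_one_iff_derivWithin hI).2
    ⟨fun t ht => (hy t ht).differentiableWithinAt, hGc.congr hyG⟩, hxy, hG.congr_right hyG.symm⟩
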